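/- arXiv:1709.07553 — 3 statements merged into one kernel-verified Lean document; each statement's English description precedes it below -/
import Mathlib

section
/- Let X and Z be independent nonnegative real-valued random variables on a probability space, let C ≥ 0 and t ≥ 0, and suppose E[exp(tX)] and E[exp(tZ)] are finite. Then E[exp(t · max(0, X + Z − C))] ≤ (exp(tC) + exp(−tC) · E[exp(tX)]) · E[exp(tZ)]. -/
/-!
Since `exp (t * max 0 s) = max 1 (exp (t * s)) ≤ 1 + exp (t * s)`, the left side is at most
`1 + exp (-(t * C)) * E[exp (t * X)] * E[exp (t * Z)]`, the expectation of the product factoring by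
independence. The constant `1` is then absorbed into `exp (t * C) * E[exp (t * Z)] ≥ 1`, which holds
because `C` and `Z` are nonnegative.
-/

open MeasureTheory ProbabilityTheory Real

lemma exp_mul_max_zero {t : ℝ} (ht : 0 ≤ t) (s : ℝ) :
    exp (t * max 0 s) = max 1 (exp (t * s)) := by
  rw [mul_max_of_nonneg _ _ ht, mul_zero, exp_monotone.map_max, exp_zero]

lemma integral_exp_mul_max_zero_sub_le {Ω : Type*} {m : MeasurableSpace Ω} {μ : Measure Ω}
    [IsProbabilityMeasure μ] {W : Ω → ℝ} {t : ℝ} (ht : 0 ≤ t)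
    (hW : Integrable (fun ω => exp (t * W ω)) μ) (C : ℝ) :
    ∫ ω, exp (t * max 0 (W ω - C)) ∂μ ≤ 1 + exp (-(t * C)) * mgf W μ t := by
  have hshift : Integrable (fun ω => exp (t * (W ω - C))) μ := by
    simpa only [sub_eq_add_neg, mul_add, mul_neg, exp_add] using hW.mul_const (exp (-(t * C)))
  simp_rw [exp_mul_max_zero ht]
  calc ∫ ω, max 1 (exp (t * (W ω - C))) ∂μ ≤ ∫ ω, (1 + exp (t * (W ω - C))) ∂μ :=
        integral_mono ((integrable_const 1).sup hshift) ((integrable_const 1).add hshift)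
          fun ω => max_le (le_add_of_nonneg_right (exp_pos _).le)
            (le_add_of_nonneg_left zero_le_one)
    _ = 1 + mgf (fun ω => W ω + -C) μ t := by
        rw [integral_add (integrable_const 1) hshift, integral_const, probReal_univ, one_smul]
        rfl
    _ = 1 + exp (-(t * C)) * mgf W μ t := by
        rw [mgf_add_const, mul_neg, mul_comm]

lemma one_le_mgf_of_nonneg {Ω : Type*} {m : MeasurableSpace Ω} {μ : Measure Ω}
    [IsProbabilityMeasure μ] {Z : Ω → ℝ} {t : ℝ} (ht : 0 ≤ t) (hZ : 0 ≤ᵐ[μ] Z)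
    (hint : Integrable (fun ω => exp (t * Z ω)) μ) :
    1 ≤ mgf Z μ t := by
  simpa using mgf_mono_of_nonneg hZ ht hint

theorem stash_mgf_step_general {Ω : Type*} [MeasureSpace Ω] [IsProbabilityMeasure (ℙ : Measure Ω)]
    (X Z : Ω → ℝ) (C t : ℝ) (hC : 0 ≤ C) (ht : 0 ≤ t)
    (hZnn : ∀ ω, 0 ≤ Z ω)
    (hindep : IndepFun X Z ℙ)
    (hXint : Integrable (fun ω => Real.exp (t * X ω)) ℙ)
    (hZint : Integrable (fun ω => Real.exp (t * Z ω)) ℙ) :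
    ∫ ω, Real.exp (t * max 0 (X ω + Z ω - C)) ∂ℙ ≤
      (Real.exp (t * C) + Real.exp (-(t * C)) * ∫ ω, Real.exp (t * X ω) ∂ℙ) *
        ∫ ω, Real.exp (t * Z ω) ∂ℙ := by
  have hsum : mgf (X + Z) ℙ t = mgf X ℙ t * mgf Z ℙ t :=
    hindep.mgf_add hXint.aestronglyMeasurable hZint.aestronglyMeasurable
  have hZ1 : 1 ≤ mgf Z ℙ t := one_le_mgf_of_nonneg ht (Filter.Eventually.of_forall hZnn) hZint
  have hC1 : 1 ≤ exp (t * C) := one_le_exp (mul_nonneg ht hC)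
  calc ∫ ω, exp (t * max 0 (X ω + Z ω - C)) ∂ℙ ≤ 1 + exp (-(t * C)) * mgf (X + Z) ℙ t :=
        integral_exp_mul_max_zero_sub_le ht (hindep.integrable_exp_mul_add hXint hZint) C
    _ ≤ (exp (t * C) + exp (-(t * C)) * mgf X ℙ t) * mgf Z ℙ t := by
        rw [hsum]
        linear_combination one_le_mul_of_one_le_of_one_le hC1 hZ1

/-- For independent nonnegative real random variables `X`, `Z`, reals `C ≥ 0`, `t ≥ 0`,
with `E[exp(tX)]` and `E[exp(tZ)]` finite (integrable),
`E[exp(t · max(0, X + Z − C))] ≤ (exp(tC) + exp(−tC) · E[exp(tX)]) · E[exp(tZ)]`. -/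
theorem stash_mgf_step {Ω : Type*} [MeasureSpace Ω] [IsProbabilityMeasure (ℙ : Measure Ω)]
    (X Z : Ω → ℝ) (C t : ℝ) (hC : 0 ≤ C) (ht : 0 ≤ t)
    (hXm : Measurable X) (hZm : Measurable Z)
    (hXnn : ∀ ω, 0 ≤ X ω) (hZnn : ∀ ω, 0 ≤ Z ω)
    (hindep : IndepFun X Z ℙ)
    (hXint : Integrable (fun ω => Real.exp (t * X ω)) ℙ)
    (hZint : Integrable (fun ω => Real.exp (t * Z ω)) ℙ) :
    ∫ ω, Real.exp (t * max 0 (X ω + Z ω - C)) ∂ℙ ≤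
      (Real.exp (t * C) + Real.exp (-(t * C)) * ∫ ω, Real.exp (t * X ω) ∂ℙ) *
        ∫ ω, Real.exp (t * Z ω) ∂ℙ :=
  stash_mgf_step_general X Z C t hC ht hZnn hindep hXint hZint
end

section
/- Fix integers B ≥ 1, D ≥ 1 and reals C > 0, t > 0. Let Z_0, Z_1, Z_2, … be i.i.d. random variables, each binomially distributed with D trials and success probability 1/B, and define the reflected random walk X_0 = 0 and X_{i+1} = max(0, X_i + Z_i − C). If E[exp(t Z_0)] ≤ (1/2) · exp(tC), then for every i ≥ 0 one has E[exp(t X_i)] ≤ exp(2tC). -/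
/-!
Since `exp (t * max 0 s) ≤ 1 + exp (t * s)`, and `X i` is a function of `Z 0, …, Z (i-1)`
and hence independent of `Z i`, the moment generating functions `M i` of the walk satisfy
`M (i+1) ≤ 1 + exp (-tC) * M i * E[exp (t Z i)] ≤ 1 + M i / 2`. So every bound `M ≥ 2`
survives the recursion, and `exp (2tC) ≥ 2` because `exp (tC) ≥ 2 E[exp (t Z 0)] ≥ 2`.
-/

open MeasureTheory ProbabilityTheory Real

namespace ProbabilityTheory

variable {Ω : Type*} {mΩ : MeasurableSpace Ω} {μ : Measure Ω} {X Y : Ω → ℝ} {c t : ℝ}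

lemma iIndepFun.indepFun_of_measurable_iSup_Iio {β γ : Type*} {mβ : MeasurableSpace β}
    {mγ : MeasurableSpace γ} {Z : ℕ → Ω → β} (hZ : ∀ i, Measurable (Z i))
    (hindep : iIndepFun Z μ) {i : ℕ} {V : Ω → γ}
    (hV : Measurable[⨆ j ∈ Set.Iio i, mβ.comap (Z j)] V) :
    IndepFun V (Z i) μ := by
  have h := indep_iSup_of_disjoint (fun j => (hZ j).comap_le) hindep.iIndep
    (S := Set.Iio i) (T := {i}) (Set.disjoint_singleton_right.2 (lt_irrefl i))
  rw [iSup_singleton] at h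
  exact (IndepFun_iff_Indep _ _ _).2 (indep_of_indep_of_le_left h hV.comap_le)

lemma IndepFun.integrable_exp_mul_add_sub_const (h : IndepFun X Y μ)
    (hX : Integrable (fun ω => exp (t * X ω)) μ) (hY : Integrable (fun ω => exp (t * Y ω)) μ)
    (c : ℝ) : Integrable (fun ω => exp (t * (X ω + Y ω - c))) μ := by
  refine ((h.integrable_exp_mul_add hX hY).mul_const (exp (-(t * c)))).congr
    (.of_forall fun ω => ?_)
  simp only [Pi.add_apply, ← exp_add]
  ring_nf

lemma IndepFun.mgf_add_sub_const (h : IndepFun X Y μ) (hX : AEMeasurable X μ)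
    (hY : AEMeasurable Y μ) (c : ℝ) :
    mgf (fun ω => X ω + Y ω - c) μ t = mgf X μ t * mgf Y μ t * exp (-(t * c)) := by
  have h' := mgf_add_const (X := X + Y) (μ := μ) (t := t) (-c)
  simp only [Pi.add_apply, ← sub_eq_add_neg] at h'
  rw [h', h.mgf_add (aemeasurable_exp_mul t hX) (aemeasurable_exp_mul t hY), mul_neg]

lemma exp_mul_max_zero_le (t s : ℝ) : exp (t * max 0 s) ≤ 1 + exp (t * s) := by
  rcases le_total s 0 with hs | hs
  · simp [max_eq_left hs, (exp_pos _).le]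
  · simp [max_eq_right hs, zero_le_one]

section Probability

variable [IsProbabilityMeasure μ]

lemma integrable_exp_mul_max_zero (hX : AEMeasurable X μ)
    (hint : Integrable (fun ω => exp (t * X ω)) μ) :
    Integrable (fun ω => exp (t * max 0 (X ω))) μ :=
  ((integrable_const 1).add hint).mono' (aemeasurable_exp_mul t (aemeasurable_const.max hX))
    (.of_forall fun ω => by
      rw [norm_of_nonneg (exp_pos _).le]
      exact exp_mul_max_zero_le t (X ω))

lemma mgf_max_zero_le (hX : AEMeasurable X μ) (hint : Integrable (fun ω => exp (t * X ω)) μ) :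
    mgf (fun ω => max 0 (X ω)) μ t ≤ 1 + mgf X μ t := by
  calc mgf (fun ω => max 0 (X ω)) μ t ≤ ∫ ω, 1 + exp (t * X ω) ∂μ :=
        integral_mono (integrable_exp_mul_max_zero hX hint) ((integrable_const 1).add hint)
          fun ω => exp_mul_max_zero_le t (X ω)
    _ = 1 + mgf X μ t := by rw [integral_add (integrable_const 1) hint]; simp [mgf]

lemma one_le_mgf_of_nonneg (hX : 0 ≤ᵐ[μ] X) (ht : 0 ≤ t)
    (hint : Integrable (fun ω => exp (t * X ω)) μ) : 1 ≤ mgf X μ t := by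
  simpa [mgf_const] using mgf_mono_of_nonneg (X := fun _ => 0) hX ht hint

end Probability

section Discrete

variable [IsFiniteMeasure μ] {α : Type*} [MeasurableSpace α] [Countable α]
  [MeasurableSingletonClass α]

lemma identDistrib_of_measureReal_eq {f g : Ω → α} (hf : Measurable f) (hg : Measurable g)
    (h : ∀ a, μ.real {ω | f ω = a} = μ.real {ω | g ω = a}) : IdentDistrib f g μ μ where
  aemeasurable_fst := hf.aemeasurable
  aemeasurable_snd := hg.aemeasurable
  map_eq := Measure.ext_of_singleton fun a => by
    rw [Measure.map_apply hf (measurableSet_singleton a),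
      Measure.map_apply hg (measurableSet_singleton a)]
    exact (measureReal_eq_measureReal_iff (measure_ne_top _ _) (measure_ne_top _ _)).1 (h a)

lemma ae_le_of_measureReal_eq_zero {N : Ω → ℕ} {D : ℕ}
    (h : ∀ k, D < k → μ.real {ω | N ω = k} = 0) : ∀ᵐ ω ∂μ, N ω ≤ D := by
  have hne : ∀ᵐ ω ∂μ, ∀ k, D < k → N ω ≠ k := ae_all_iff.2 fun k => by
    by_cases hk : D < k
    · have hk0 := (measureReal_eq_zero_iff (measure_ne_top _ _)).1 (h k hk)
      exact (measure_eq_zero_iff_ae_notMem.1 hk0).mono fun ω hω _ => hω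
    · exact .of_forall fun _ hk' => absurd hk' hk
  filter_upwards [hne] with ω hω
  by_contra! hlt
  exact hω _ hlt rfl

end Discrete

def reflectedWalk (Z : ℕ → Ω → ℝ) (c : ℝ) : ℕ → Ω → ℝ
  | 0 => 0
  | i + 1 => fun ω => max 0 (reflectedWalk Z c i ω + Z i ω - c)

variable {Z : ℕ → Ω → ℝ}

lemma measurable_reflectedWalk_iSup_Iio (i : ℕ) :
    Measurable[⨆ j ∈ Set.Iio i, MeasurableSpace.comap (Z j) inferInstance]
      (reflectedWalk Z c i) := by
  induction i with
  | zero => exact measurable_const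
  | succ i ih =>
    refine measurable_const.max (((ih.mono ?_ le_rfl).add (Measurable.of_comap_le ?_)).sub_const c)
    · exact biSup_mono fun j (hj : j < i) => Nat.lt_succ_of_lt hj
    · exact le_iSup₂_of_le (f := fun j (_ : j ∈ Set.Iio (i + 1)) =>
        MeasurableSpace.comap (Z j) inferInstance) i (Nat.lt_succ_self i) le_rfl

lemma measurable_reflectedWalk (hZ : ∀ i, Measurable (Z i)) (i : ℕ) :
    Measurable (reflectedWalk Z c i) :=
  (measurable_reflectedWalk_iSup_Iio i).mono (iSup₂_le fun j _ => (hZ j).comap_le) le_rfl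

lemma indepFun_reflectedWalk (hZ : ∀ i, Measurable (Z i)) (hindep : iIndepFun Z μ) (i : ℕ) :
    IndepFun (reflectedWalk Z c i) (Z i) μ :=
  hindep.indepFun_of_measurable_iSup_Iio hZ (measurable_reflectedWalk_iSup_Iio i)

section Walk

variable [IsProbabilityMeasure μ]

lemma integrable_exp_mul_reflectedWalk (hZ : ∀ i, Measurable (Z i)) (hindep : iIndepFun Z μ)
    (hint : ∀ i, Integrable (fun ω => exp (t * Z i ω)) μ) (i : ℕ) :
    Integrable (fun ω => exp (t * reflectedWalk Z c i ω)) μ := by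
  induction i with
  | zero => simp [reflectedWalk]
  | succ i ih =>
    exact integrable_exp_mul_max_zero
      (((measurable_reflectedWalk hZ i).add (hZ i)).sub_const c).aemeasurable
      ((indepFun_reflectedWalk hZ hindep i).integrable_exp_mul_add_sub_const ih (hint i) c)

lemma mgf_reflectedWalk_succ_le (hZ : ∀ i, Measurable (Z i)) (hindep : iIndepFun Z μ)
    (hint : ∀ i, Integrable (fun ω => exp (t * Z i ω)) μ) (i : ℕ) :
    mgf (reflectedWalk Z c (i + 1)) μ t ≤
      1 + mgf (reflectedWalk Z c i) μ t * mgf (Z i) μ t * exp (-(t * c)) := by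
  have hXm := measurable_reflectedWalk (c := c) hZ i
  have hind := indepFun_reflectedWalk (c := c) hZ hindep i
  rw [← hind.mgf_add_sub_const hXm.aemeasurable (hZ i).aemeasurable]
  exact mgf_max_zero_le ((hXm.add (hZ i)).sub_const c).aemeasurable
    (hind.integrable_exp_mul_add_sub_const (integrable_exp_mul_reflectedWalk hZ hindep hint i)
      (hint i) c)

lemma mgf_reflectedWalk_le (hZ : ∀ i, Measurable (Z i)) (hindep : iIndepFun Z μ)
    (hint : ∀ i, Integrable (fun ω => exp (t * Z i ω)) μ)
    (hmgf : ∀ i, mgf (Z i) μ t ≤ exp (t * c) / 2) {M : ℝ} (hM : 2 ≤ M) (i : ℕ) :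
    mgf (reflectedWalk Z c i) μ t ≤ M := by
  induction i with
  | zero => rw [reflectedWalk, mgf_zero_fun, probReal_univ]; linarith
  | succ i ih =>
    calc mgf (reflectedWalk Z c (i + 1)) μ t
        ≤ 1 + mgf (reflectedWalk Z c i) μ t * mgf (Z i) μ t * exp (-(t * c)) :=
          mgf_reflectedWalk_succ_le hZ hindep hint i
      _ ≤ 1 + M * (exp (t * c) / 2) * exp (-(t * c)) := by
          gcongr
          exacts [mgf_nonneg, hmgf i]
      _ = 1 + M / 2 := by
          rw [mul_assoc, div_mul_eq_mul_div, ← exp_add, add_neg_cancel, exp_zero, mul_one_div]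
      _ ≤ M := by linarith

theorem mgf_reflectedWalk_le_exp_two_mul (hZ : ∀ i, Measurable (Z i)) (hindep : iIndepFun Z μ)
    (hident : ∀ i, IdentDistrib (Z i) (Z 0) μ μ) (hZ0 : 0 ≤ᵐ[μ] Z 0) (ht : 0 ≤ t)
    (hint : Integrable (fun ω => exp (t * Z 0 ω)) μ) (hmgf : mgf (Z 0) μ t ≤ exp (t * c) / 2)
    (i : ℕ) : mgf (reflectedWalk Z c i) μ t ≤ exp (2 * t * c) := by
  have hmgf_eq : ∀ i, mgf (Z i) μ t = mgf (Z 0) μ t := fun i =>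
    congrFun (mgf_congr_identDistrib (hident i)) t
  have htc : 2 ≤ exp (t * c) := by linarith [one_le_mgf_of_nonneg hZ0 ht hint]
  have hM : 2 ≤ exp (2 * t * c) := by
    rw [show 2 * t * c = t * c + t * c by ring, exp_add]
    nlinarith
  refine mgf_reflectedWalk_le hZ hindep (fun i => ?_) (fun i => (hmgf_eq i).trans_le hmgf) hM i
  exact ((hident i).comp (measurable_const_mul t).exp).integrable_iff.2 hint

end Walk

end ProbabilityTheory

theorem reflected_walk_mgf_bound_general {Ω : Type*} [MeasureSpace Ω]
    [IsProbabilityMeasure (ℙ : Measure Ω)]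
    (B D : ℕ) (C t : ℝ) (ht : 0 < t)
    (Z : ℕ → Ω → ℕ) (hZm : ∀ i, Measurable (Z i))
    (hindep : iIndepFun Z ℙ)
    (hbin : ∀ i, ∀ k : ℕ, (ℙ {ω : Ω | Z i ω = k}).toReal =
      (D.choose k : ℝ) * (1 / B) ^ k * (1 - 1 / B) ^ (D - k))
    (X : ℕ → Ω → ℝ)
    (hX0 : ∀ ω, X 0 ω = 0)
    (hXrec : ∀ i ω, X (i + 1) ω = max 0 (X i ω + Z i ω - C))
    (hmgf : (∫ ω, Real.exp (t * Z 0 ω) ∂ℙ) ≤ (1 / 2) * Real.exp (t * C)) :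
    ∀ i, (∫ ω, Real.exp (t * X i ω) ∂ℙ) ≤ Real.exp (2 * t * C) := by
  set Y : ℕ → Ω → ℝ := fun i ω => Z i ω
  have hX : X = reflectedWalk Y C := by
    funext i ω
    induction i with
    | zero => exact hX0 ω
    | succ i ih => rw [hXrec, ih]; rfl
  have hYm : ∀ i, Measurable (Y i) := fun i => measurable_from_nat.comp (hZm i)
  have hident : ∀ i, IdentDistrib (Y i) (Y 0) ℙ ℙ := fun i =>
    (identDistrib_of_measureReal_eq (hZm i) (hZm 0) fun k =>
      (hbin i k).trans (hbin 0 k).symm).comp measurable_from_nat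
  have hbdd : ∀ᵐ ω ∂ℙ, Z 0 ω ≤ D := ae_le_of_measureReal_eq_zero fun k hk => by
    simp [measureReal_def, hbin, Nat.choose_eq_zero_of_lt hk]
  have hint : Integrable (fun ω => exp (t * Y 0 ω)) ℙ :=
    integrable_exp_mul_of_le t D ht.le (hYm 0).aemeasurable
      (hbdd.mono fun ω hω => Nat.cast_le.2 hω)
  intro i
  rw [hX]
  exact mgf_reflectedWalk_le_exp_two_mul hYm
    (hindep.comp (fun _ => Nat.cast) fun _ => measurable_from_nat) hident
    (.of_forall fun ω => Nat.cast_nonneg (Z 0 ω)) ht.le hint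
    (hmgf.trans_eq (one_div_mul_eq_div _ _)) i

/-- Fix integers `B ≥ 1`, `D ≥ 1` and reals `C > 0`, `t > 0`. Let `Z 0, Z 1, …` be
i.i.d. `Bin(1/B, D)` random variables and let `X` be the reflected random walk
`X 0 = 0`, `X (i+1) = max(0, X i + Z i − C)`. If `E[exp(t · Z 0)] ≤ (1/2)·exp(tC)`,
then `E[exp(t · X i)] ≤ exp(2tC)` for all `i`. -/
theorem reflected_walk_mgf_bound {Ω : Type*} [MeasureSpace Ω]
    [IsProbabilityMeasure (ℙ : Measure Ω)]
    (B D : ℕ) (hB : 1 ≤ B) (hD : 1 ≤ D) (C t : ℝ) (hC : 0 < C) (ht : 0 < t)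
    (Z : ℕ → Ω → ℕ) (hZm : ∀ i, Measurable (Z i))
    (hindep : iIndepFun Z ℙ)
    (hbin : ∀ i, ∀ k : ℕ, (ℙ {ω : Ω | Z i ω = k}).toReal =
      (D.choose k : ℝ) * (1 / B) ^ k * (1 - 1 / B) ^ (D - k))
    (X : ℕ → Ω → ℝ)
    (hX0 : ∀ ω, X 0 ω = 0)
    (hXrec : ∀ i ω, X (i + 1) ω = max 0 (X i ω + Z i ω - C))
    (hmgf : (∫ ω, Real.exp (t * Z 0 ω) ∂ℙ) ≤ (1 / 2) * Real.exp (t * C)) :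
    ∀ i, (∫ ω, Real.exp (t * X i ω) ∂ℙ) ≤ Real.exp (2 * t * C) :=
  reflected_walk_mgf_bound_general B D C t ht Z hZm hindep hbin X hX0 hXrec hmgf
end

section
/- Fix integers B ≥ 1, D ≥ 1 and reals C > 0 and S, and set t = CB/D − 1. Assume t > 0, S/B > 2C, and exp(t) < 1 + (tC − ln 2)·B/D. On a common probability space, for each j ∈ {0, …, B−1} let (X_i^{(j)})_{0 ≤ i ≤ B} be a process with X_0^{(j)} = 0 and X_{i+1}^{(j)} = max(0, X_i^{(j)} + Z_i^{(j)} − C), where for each fixed j the increments Z_0^{(j)}, …, Z_{B−1}^{(j)} are i.i.d. binomial with D trials and success probability 1/B (the processes for different j may be arbitrarily correlated). Then Pr[ ∃ j < B, ∃ i ≤ B : X_i^{(j)} > S/B ] ≤ B² · exp((CB/D − 1) · (2C − S/B)). -/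
open MeasureTheory ProbabilityTheory Real
open scoped unitInterval

/-! Each per-bucket stash is a reflected random walk `X (i+1) = max 0 (X i + Z i - C)`, and
unrolling the recursion (Lindley) shows that `X i > s` forces some window sum
`∑_{k ≤ m < i} (Z m - C)` to exceed `s`. The choice of `t` together with
`1 + x ≤ exp x` makes the moment generating function of each increment `Z m - C` at most `1/2`,
so Chernoff bounds the window of length `ℓ` by `exp (-t s) 2^{-ℓ}`. Summing the geometric
series over windows, then a union bound over the `B` times and `B` buckets, gives
`B² exp (-t s)`, which is below the claimed bound. -/

lemma exists_le_sum_Ico_of_eq_max_zero_add {x y : ℕ → ℝ} (h0 : x 0 = 0)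
    (hrec : ∀ i, x (i + 1) = max 0 (x i + y i)) (i : ℕ) :
    ∃ k ≤ i, x i ≤ ∑ m ∈ Finset.Ico k i, y m := by
  induction i with
  | zero => exact ⟨0, le_rfl, by simp [h0]⟩
  | succ i ih =>
    obtain ⟨k, hki, hx⟩ := ih
    rcases le_or_gt (x i + y i) 0 with hneg | hpos
    · exact ⟨i + 1, le_rfl, by simp [hrec, hneg]⟩
    · refine ⟨k, hki.trans i.le_succ, ?_⟩
      rw [hrec, max_eq_right hpos.le, Finset.sum_Ico_succ_top hki]
      linarith

lemma sum_range_half_pow_sub_le_one (i : ℕ) :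
    ∑ k ∈ Finset.range (i + 1), (1 / 2 : ℝ) ^ (i + 1 - k) ≤ 1 := by
  have hreflect := Finset.sum_range_reflect (fun k => (1 / 2 : ℝ) ^ (k + 1)) (i + 1)
  calc ∑ k ∈ Finset.range (i + 1), (1 / 2 : ℝ) ^ (i + 1 - k)
      = ∑ k ∈ Finset.range (i + 1), (1 / 2 : ℝ) ^ (i + 1 - 1 - k + 1) := by
        refine Finset.sum_congr rfl fun k hk => ?_
        rw [Finset.mem_range] at hk
        congr 1
        omega
    _ = 1 / 2 * ∑ k ∈ Finset.range (i + 1), (1 / 2 : ℝ) ^ k := by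
        rw [hreflect, Finset.mul_sum]
        simp only [pow_succ']
    _ ≤ 1 := by linarith [sum_geometric_two_le (i + 1)]

lemma binomial_mgf_le_exp {p : ℝ} (hp0 : 0 ≤ p) (hp1 : p ≤ 1) (t : ℝ) (n : ℕ) :
    (p * exp t + (1 - p)) ^ n ≤ exp (n * (p * (exp t - 1))) := by
  rw [exp_nat_mul]
  refine pow_le_pow_left₀ (add_nonneg (by positivity) (sub_nonneg.2 hp1)) ?_ n
  linarith [add_one_le_exp (p * (exp t - 1))]

namespace ProbabilityTheory

section Binomial

variable {Ω : Type*} [MeasurableSpace Ω] {μ : Measure Ω} {Z : Ω → ℕ} {n : ℕ} {p : I}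

lemma hasLaw_binomial_of_measure_eq [IsFiniteMeasure μ] (hZ : Measurable Z)
    (h : ∀ k : ℕ, (μ {ω | Z ω = k}).toReal = n.choose k * (p : ℝ) ^ k * (1 - p) ^ (n - k)) :
    HasLaw Z Bin(n, p) μ where
  aemeasurable := hZ.aemeasurable
  map_eq := by
    refine Measure.ext_of_measureReal_singleton fun k => ?_
    rw [binomial_real_singleton, map_measureReal_apply hZ (measurableSet_singleton k), ← h k]
    rfl

lemma HasLaw.integrable_comp_binomial {E : Type*} [NormedAddCommGroup E]
    (hZ : HasLaw Z Bin(n, p) μ) (f : ℕ → E) : Integrable (fun ω => f (Z ω)) μ := by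
  have hint := (integrable_map_measure (f := Z) (g := f) (by fun_prop) hZ.aemeasurable).1
  rw [hZ.map_eq] at hint
  exact hint (integrable_binomial f)

lemma HasLaw.mgf_binomial (hZ : HasLaw Z Bin(n, p) μ) (t : ℝ) :
    mgf (fun ω => (Z ω : ℝ)) μ t = (p * exp t + (1 - p)) ^ n := by
  rw [mgf, ← Function.comp_def (fun k : ℕ => exp (t * k)) Z, hZ.integral_comp (by fun_prop),
    integral_binomial, add_pow, ← Nat.Iio_eq_range, Finset.Iio_add_one_eq_Iic]
  refine Finset.sum_congr rfl fun k _ => ?_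
  rw [smul_eq_mul, mul_pow, ← exp_nat_mul]
  ring_nf

lemma HasLaw.mgf_binomial_sub_le_half (hZ : HasLaw Z Bin(n, p) μ) {t C : ℝ}
    (hdrift : n * ((p : ℝ) * (exp t - 1)) ≤ t * C - log 2) :
    mgf (fun ω => (Z ω : ℝ) - C) μ t ≤ 1 / 2 := by
  simp only [sub_eq_add_neg _ C]
  rw [mgf_add_const, hZ.mgf_binomial]
  calc ((p : ℝ) * exp t + (1 - p)) ^ n * exp (t * -C)
      ≤ exp (n * (p * (exp t - 1))) * exp (t * -C) := by
        gcongr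
        exact binomial_mgf_le_exp p.2.1 p.2.2 t n
    _ ≤ exp (-log 2) := by
        rw [← exp_add]
        gcongr
        linarith
    _ = 1 / 2 := by rw [exp_neg, exp_log two_pos, one_div]

end Binomial

section ReflectedWalk

variable {Ω : Type*} [MeasurableSpace Ω] {μ : Measure Ω}

lemma iIndepFun.measureReal_sum_ge_le_exp_mul_pow [IsFiniteMeasure μ]
    {ι : Type*} {Y : ι → Ω → ℝ} (hind : iIndepFun Y μ) (hY : ∀ i, Measurable (Y i)) {t r : ℝ}
    (ht : 0 ≤ t) (hint : ∀ i, Integrable (fun ω => exp (t * Y i ω)) μ)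
    (hmgf : ∀ i, mgf (Y i) μ t ≤ r) (s : Finset ι) (a : ℝ) :
    μ.real {ω | a ≤ ∑ i ∈ s, Y i ω} ≤ exp (-t * a) * r ^ s.card := by
  have hchernoff := measure_ge_le_exp_mul_mgf (X := ∑ i ∈ s, Y i) a ht
    (hind.integrable_exp_mul_sum hY fun i _ => hint i)
  simp only [Finset.sum_apply] at hchernoff
  refine hchernoff.trans (mul_le_mul_of_nonneg_left ?_ (exp_nonneg _))
  rw [hind.mgf_sum hY, ← Finset.prod_const]
  exact Finset.prod_le_prod (fun _ _ => mgf_nonneg) fun i _ => hmgf i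

lemma measureReal_exists_reflected_walk_gt_le [IsFiniteMeasure μ] {W : ℕ → Ω → ℝ}
    (hind : iIndepFun W μ) (hW : ∀ m, Measurable (W m)) {t : ℝ} (ht : 0 ≤ t)
    (hint : ∀ m, Integrable (fun ω => exp (t * W m ω)) μ) (hmgf : ∀ m, mgf (W m) μ t ≤ 1 / 2)
    {X : ℕ → Ω → ℝ} (h0 : ∀ ω, X 0 ω = 0) (hrec : ∀ i ω, X (i + 1) ω = max 0 (X i ω + W i ω))
    {s : ℝ} (hs : 0 ≤ s) (n : ℕ) :
    μ.real {ω | ∃ i ≤ n, s < X i ω} ≤ n * exp (-(t * s)) := by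
  have hsub : {ω | ∃ i ≤ n, s < X i ω} ⊆ ⋃ i ∈ Finset.range n, ⋃ k ∈ Finset.range (i + 1),
      {ω | s ≤ ∑ m ∈ Finset.Ico k (i + 1), W m ω} := by
    rintro ω ⟨i, hin, hXi⟩
    obtain ⟨k, hki, hX⟩ :=
      exists_le_sum_Ico_of_eq_max_zero_add (x := (X · ω)) (h0 ω) (fun i => hrec i ω) i
    have hki : k < i := hki.lt_of_ne <| by
      rintro rfl
      rw [Finset.Ico_self, Finset.sum_empty] at hX
      linarith
    obtain ⟨i, rfl⟩ := Nat.exists_eq_add_one_of_ne_zero (Nat.ne_zero_of_lt hki)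
    simp only [Set.mem_iUnion, Finset.mem_range, Set.mem_ofPred_eq]
    exact ⟨i, hin, k, hki, (hXi.trans_le hX).le⟩
  calc μ.real {ω | ∃ i ≤ n, s < X i ω}
      ≤ ∑ i ∈ Finset.range n, ∑ k ∈ Finset.range (i + 1),
          μ.real {ω | s ≤ ∑ m ∈ Finset.Ico k (i + 1), W m ω} :=
        (measureReal_mono hsub (measure_ne_top _ _)).trans <|
          (measureReal_biUnion_finset_le _ _).trans <|
            Finset.sum_le_sum fun i _ => measureReal_biUnion_finset_le _ _
    _ ≤ ∑ i ∈ Finset.range n, ∑ k ∈ Finset.range (i + 1),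
          exp (-(t * s)) * (1 / 2) ^ (i + 1 - k) := by
        gcongr with i _ k _
        simpa only [Nat.card_Ico, neg_mul] using
          hind.measureReal_sum_ge_le_exp_mul_pow hW ht hint hmgf (Finset.Ico k (i + 1)) s
    _ ≤ ∑ i ∈ Finset.range n, exp (-(t * s)) := by
        gcongr with i
        rw [← Finset.mul_sum]
        exact mul_le_of_le_one_right (exp_nonneg _) (sum_range_half_pow_sub_le_one i)
    _ = n * exp (-(t * s)) := by simp

end ReflectedWalk

end ProbabilityTheory

theorem stash_overflow_bound_general {Ω : Type*} [MeasureSpace Ω]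
    [IsProbabilityMeasure (ℙ : Measure Ω)]
    (B D : ℕ) (hB : 1 ≤ B) (hD : 1 ≤ D) (C S : ℝ) (hC : 0 < C)
    (ht : 0 < C * B / D - 1)
    (hS : S / B > 2 * C)
    (hexp : Real.exp (C * B / D - 1) < 1 + ((C * B / D - 1) * C - Real.log 2) * B / D)
    (Z : ℕ → ℕ → Ω → ℕ) (hZm : ∀ j i, Measurable (Z j i))
    (hindep : ∀ j, iIndepFun (Z j) ℙ)
    (hbin : ∀ j i, ∀ k : ℕ, (ℙ {ω : Ω | Z j i ω = k}).toReal =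
      (D.choose k : ℝ) * (1 / B) ^ k * (1 - 1 / B) ^ (D - k))
    (X : ℕ → ℕ → Ω → ℝ)
    (hX0 : ∀ j ω, X j 0 ω = 0)
    (hXrec : ∀ j i ω, X j (i + 1) ω = max 0 (X j i ω + Z j i ω - C)) :
    (ℙ {ω : Ω | ∃ j < B, ∃ i ≤ B, X j i ω > S / B}).toReal ≤
      (B : ℝ) ^ 2 * Real.exp ((C * B / D - 1) * (2 * C - S / B)) := by
  set t := C * B / D - 1
  have hBpos : (0 : ℝ) < B := by exact_mod_cast hB
  have hDpos : (0 : ℝ) < D := by exact_mod_cast hD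
  let p : I := ⟨1 / B, by positivity, (div_le_one hBpos).2 (by exact_mod_cast hB)⟩
  have hlaw : ∀ j i, HasLaw (Z j i) Bin(D, p) ℙ := fun j i =>
    hasLaw_binomial_of_measure_eq (hZm j i) (hbin j i)
  have hdrift : D * ((p : ℝ) * (exp t - 1)) ≤ t * C - log 2 := by
    rw [← sub_lt_iff_lt_add', lt_div_iff₀ hDpos] at hexp
    rw [show (D : ℝ) * ((p : ℝ) * (exp t - 1)) = (exp t - 1) * D / B by simp [p]; ring,
      div_le_iff₀ hBpos]
    exact hexp.le
  have hbucket (j : ℕ) :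
      (ℙ : Measure Ω).real {ω | ∃ i ≤ B, S / B < X j i ω} ≤ B * exp (-(t * (S / B))) := by
    refine measureReal_exists_reflected_walk_gt_le (W := fun i ω => (Z j i ω : ℝ) - C)
      ((hindep j).comp (fun _ (z : ℕ) => (z : ℝ) - C) fun _ => by fun_prop) (fun i => by fun_prop)
      ht.le (fun i => ?_) (fun i => (hlaw j i).mgf_binomial_sub_le_half hdrift) (hX0 j)
      (fun i ω => by rw [hXrec, add_sub_assoc]) (by linarith) B
    simpa only [mul_sub] using (hlaw j i).integrable_comp_binomial fun k : ℕ => exp (t * (k - C))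
  calc (ℙ {ω : Ω | ∃ j < B, ∃ i ≤ B, X j i ω > S / B}).toReal
      = (ℙ : Measure Ω).real (⋃ j ∈ Finset.range B, {ω | ∃ i ≤ B, S / B < X j i ω}) := by
        rw [measureReal_def]; congr 2; ext ω; simp
    _ ≤ ∑ j ∈ Finset.range B, (ℙ : Measure Ω).real {ω | ∃ i ≤ B, S / B < X j i ω} :=
        measureReal_biUnion_finset_le _ _
    _ ≤ ∑ j ∈ Finset.range B, B * exp (-(t * (S / B))) := Finset.sum_le_sum fun j _ => hbucket j
    _ = B ^ 2 * exp (-(t * (S / B))) := by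
        rw [Finset.sum_const, Finset.card_range, nsmul_eq_mul]; ring
    _ ≤ B ^ 2 * exp (t * (2 * C - S / B)) := by gcongr; nlinarith

/-- Lemma 3 (stash overflow bound). Fix integers `B ≥ 1`, `D ≥ 1` and reals `C > 0`, `S`,
and set `t = CB/D − 1`. Assume `t > 0`, `S/B > 2C`, and
`exp t < 1 + (tC − ln 2)·B/D`. For each `j < B` let `X j` be the reflected walk
`X j 0 = 0`, `X j (i+1) = max(0, X j i + Z j i − C)`, where for each fixed `j` the
increments `Z j 0, …, Z j (B−1), …` are i.i.d. `Bin(1/B, D)` (processes for different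
`j` may be arbitrarily correlated). Then
`Pr[∃ j < B, ∃ i ≤ B, X j i > S/B] ≤ B² · exp((CB/D − 1)·(2C − S/B))`. -/
theorem stash_overflow_bound {Ω : Type*} [MeasureSpace Ω]
    [IsProbabilityMeasure (ℙ : Measure Ω)]
    (B D : ℕ) (hB : 1 ≤ B) (hD : 1 ≤ D) (C S : ℝ) (hC : 0 < C)
    (ht : 0 < C * B / D - 1)
    (hS : S / B > 2 * C)
    (hexp : Real.exp (C * B / D - 1) < 1 + ((C * B / D - 1) * C - Real.log 2) * B / D)
    (Z : ℕ → ℕ → Ω → ℕ) (hZm : ∀ j i, Measurable (Z j i))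
    (hindep : ∀ j, iIndepFun (Z j) ℙ)
    (hbin : ∀ j i, ∀ k : ℕ, (ℙ {ω : Ω | Z j i ω = k}).toReal =
      (D.choose k : ℝ) * (1 / B) ^ k * (1 - 1 / B) ^ (D - k))
    (X : ℕ → ℕ → Ω → ℝ) (hXm : ∀ j i, Measurable (X j i))
    (hX0 : ∀ j ω, X j 0 ω = 0)
    (hXrec : ∀ j i ω, X j (i + 1) ω = max 0 (X j i ω + Z j i ω - C)) :
    (ℙ {ω : Ω | ∃ j < B, ∃ i ≤ B, X j i ω > S / B}).toReal ≤
      (B : ℝ) ^ 2 * Real.exp ((C * B / D - 1) * (2 * C - S / B)) :=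
  stash_overflow_bound_general B D hB hD C S hC ht hS hexp Z hZm hindep hbin X hX0 hXrec
end
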